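/- Let a, c, d, f, g : ℝ → ℝ be continuous with a(t) ≠ 0, and let μ be differentiable with μ(t) ≠ 0 on an interval J. Set α(t) = μ'(t)/(4a(t)μ(t)) − d(t)/(2a(t)), E(t) = exp(−∫₀ᵗ (c(τ) − 2d(τ)) dτ), and define δ(t) = (E(t)/μ(t))·∫₀ᵗ E(τ)⁻¹·[(f(τ) − (d(τ)/a(τ))g(τ))·μ(τ) + (g(τ)/(2a(τ)))·μ'(τ)] dτ. Then δ is differentiable on J and satisfies δ' + (c + 4aα)δ = f + 2αg. -/

import Mathlib

/-! `E` is an integrating factor: `E' = -(c - 2d) E`, and `4aα = μ'/μ - 2d`, so the left-hand side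
of the equation collapses to `(E/μ) h`, which is `f + 2αg` after clearing denominators. -/

open MeasureTheory intervalIntegral

theorem hasDerivAt_exp_neg_integral {p : ℝ → ℝ} (hp : Continuous p) (t : ℝ) :
    HasDerivAt (fun s => Real.exp (-∫ τ in (0:ℝ)..s, p τ))
      (-p t * Real.exp (-∫ τ in (0:ℝ)..t, p τ)) t := by
  have hP : HasDerivAt (fun s => ∫ τ in (0:ℝ)..s, p τ) (p t) t :=
    integral_hasDerivAt_right (hp.intervalIntegrable _ _) (hp.stronglyMeasurableAtFilter _ _)
      hp.continuousAt
  simpa [mul_comm] using hP.neg.exp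

theorem hasDerivAt_div_mul_of_hasDerivAt_neg_mul {E μ I : ℝ → ℝ} {p μ' I' t : ℝ}
    (hE : HasDerivAt E (-p * E t) t) (hμ : HasDerivAt μ μ' t) (hI : HasDerivAt I I' t)
    (hμ0 : μ t ≠ 0) :
    HasDerivAt (fun s => E s / μ s * I s)
      (-(p + μ' / μ t) * (E t / μ t * I t) + E t / μ t * I') t := by
  refine ((hE.div hμ hμ0).mul hI).congr_deriv ?_
  rw [Pi.div_apply]
  field_simp
  ring

theorem delta_coefficient_ode_general
    (a c d f g : ℝ → ℝ)
    (hc : Continuous c) (hd : Continuous d)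
    (ha0 : ∀ t : ℝ, a t ≠ 0)
    (J : Set ℝ) (hJopen : IsOpen J)
    (μ : ℝ → ℝ) (hμ : ∀ t ∈ J, DifferentiableAt ℝ μ t) (hμ0 : ∀ t ∈ J, μ t ≠ 0)
    (α : ℝ → ℝ)
    (hα : α = fun t => deriv μ t / (4 * a t * μ t) - d t / (2 * a t))
    (E : ℝ → ℝ) (hE : E = fun t => Real.exp (-∫ τ in (0:ℝ)..t, (c τ - 2 * d τ)))
    (h : ℝ → ℝ)
    (hh : h = fun τ =>
      (E τ)⁻¹ * ((f τ - d τ / a τ * g τ) * μ τ + g τ / (2 * a τ) * deriv μ τ))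
    (hInt : ∀ t ∈ J, IntervalIntegrable h volume 0 t)
    (hhc : ∀ t ∈ J, ContinuousAt h t)
    (δ : ℝ → ℝ) (hδ : δ = fun t => E t / μ t * ∫ τ in (0:ℝ)..t, h τ) :
    ∀ t ∈ J, DifferentiableAt ℝ δ t ∧
      deriv δ t + (c t + 4 * a t * α t) * δ t = f t + 2 * α t * g t := by
  intro t ht
  have hE' : HasDerivAt E (-(c t - 2 * d t) * E t) t :=
    hE ▸ hasDerivAt_exp_neg_integral (hc.sub (continuous_const.mul hd)) t
  have hI : HasDerivAt (fun s => ∫ τ in (0:ℝ)..s, h τ) (h t) t :=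
    integral_hasDerivAt_right (hInt t ht)
      (ContinuousOn.stronglyMeasurableAtFilter hJopen
        (fun s hs => (hhc s hs).continuousWithinAt) t ht) (hhc t ht)
  have hδ' := hδ ▸ hasDerivAt_div_mul_of_hasDerivAt_neg_mul hE' (hμ t ht).hasDerivAt hI (hμ0 t ht)
  refine ⟨hδ'.differentiableAt, ?_⟩
  have hcoeff : c t + 4 * a t * α t = (c t - 2 * d t) + deriv μ t / μ t := by
    rw [hα]; field_simp [ha0 t, hμ0 t ht]; ring
  have hδt : δ t = E t / μ t * ∫ τ in (0:ℝ)..t, h τ := by rw [hδ]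
  have hE0 : E t ≠ 0 := hE ▸ (Real.exp_pos _).ne'
  rw [hcoeff, hδ'.deriv, hδt, neg_mul, neg_add_cancel_comm, hh, hα]
  field_simp [ha0 t, hμ0 t ht, hE0]
  ring

/-- The coefficient `δ(t) = (E/μ)·∫₀ᵗ E⁻¹[(f − (d/a)g)μ + (g/(2a))μ']`, with
`E(t) = exp(−∫₀ᵗ(c − 2d))` and `α = μ'/(4aμ) − d/(2a)`, is differentiable and
satisfies `δ' + (c + 4aα)δ = f + 2αg` on `J`. -/
theorem delta_coefficient_ode
    (a c d f g : ℝ → ℝ)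
    (ha : Continuous a) (hc : Continuous c) (hd : Continuous d)
    (hf : Continuous f) (hg : Continuous g) (ha0 : ∀ t : ℝ, a t ≠ 0)
    (J : Set ℝ) (hJopen : IsOpen J) (hJconn : J.OrdConnected)
    (μ : ℝ → ℝ) (hμ : ∀ t ∈ J, DifferentiableAt ℝ μ t) (hμ0 : ∀ t ∈ J, μ t ≠ 0)
    (α : ℝ → ℝ)
    (hα : α = fun t => deriv μ t / (4 * a t * μ t) - d t / (2 * a t))
    (E : ℝ → ℝ) (hE : E = fun t => Real.exp (-∫ τ in (0:ℝ)..t, (c τ - 2 * d τ)))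
    (h : ℝ → ℝ)
    (hh : h = fun τ =>
      (E τ)⁻¹ * ((f τ - d τ / a τ * g τ) * μ τ + g τ / (2 * a τ) * deriv μ τ))
    (hInt : ∀ t ∈ J, IntervalIntegrable h volume 0 t)
    (hhc : ∀ t ∈ J, ContinuousAt h t)
    (δ : ℝ → ℝ) (hδ : δ = fun t => E t / μ t * ∫ τ in (0:ℝ)..t, h τ) :
    ∀ t ∈ J, DifferentiableAt ℝ δ t ∧
      deriv δ t + (c t + 4 * a t * α t) * δ t = f t + 2 * α t * g t :=
  delta_coefficient_ode_general a c d f g hc hd ha0 J hJopen μ hμ hμ0 α hα E hE h hh hInt hhc δ hδ
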